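/- Let x_1, …, x_m be unit vectors in ℝ^d with |x_i·x_j| ≤ √(2·log(2m²/δ)/d) for all i ≠ j, for some δ ∈ (0,1), let y_i ∈ {−1,+1}, and assume d ≥ 32·m⁴·n²·log(2m²/δ). Let θ = (w_j, b_j)_{j=1}^n be a KKT point (with multipliers λ_i) of the margin-maximization problem for the fixed-output-weight network, and suppose ∑_{j=1}^{n/2} b_j − ∑_{j=n/2+1}^{n} b_j ≤ 1/4. Then λ_i ≥ 1/(4n) for every i with y_i = +1. -/

import Mathlib

/-!
Complementary slackness and the KKT form of `wⱼ, bⱼ` give `∑ₖ λₖ = ∑ⱼ (‖wⱼ‖² + bⱼ²)`. For nearly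
orthonormal inputs `‖wⱼ‖² ≥ ∑ₖ λₖ² sₖⱼ² - ε (∑ₖ λₖ sₖⱼ)²`, and every sample with `λₖ > 0` has a
neuron with `sₖⱼ = 1`, so `Λ = ∑ₖ λₖ` satisfies `Λ² / m - ε n Λ² ≤ Λ`; as `ε m n ≤ 1/4`, this gives
`ε n Λ ≤ 1/3`. Near orthogonality also forces every bias to be nonnegative and
`|⟪wⱼ, xᵢ⟫| ≤ λᵢ + ε Λ`, so for a positive sample `1 ≤ N(xᵢ) ≤ ∑ⱼ vⱼ bⱼ + n λᵢ + ε n Λ`, and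
`∑ⱼ vⱼ bⱼ ≤ 1/4` leaves `n λᵢ ≥ 1/4`.
-/

/-- ReLU. -/
noncomputable def relu (z : ℝ) : ℝ := max z 0

/-- Fixed output weights: +1 for the first n/2 neurons, -1 for the rest. -/
def vsign (n : ℕ) (j : Fin n) : ℝ := if (j : ℕ) < n / 2 then 1 else -1

/-- 2-layer ReLU network on ℝ^d with fixed output weights ±1. -/
noncomputable def netF {d n : ℕ} (w : Fin n → EuclideanSpace ℝ (Fin d)) (b : Fin n → ℝ)
    (x : EuclideanSpace ℝ (Fin d)) : ℝ :=
  ∑ j, vsign n j * relu ((inner ℝ (w j) x : ℝ) + b j)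

/-- KKT point (with multipliers `lam`) of the margin-maximization problem for the
fixed-output-weight network. -/
def IsKKTFixWith {d m n : ℕ} (x : Fin m → EuclideanSpace ℝ (Fin d)) (y : Fin m → ℝ)
    (w : Fin n → EuclideanSpace ℝ (Fin d)) (b : Fin n → ℝ) (lam : Fin m → ℝ) : Prop :=
  (∀ i, 1 ≤ y i * netF w b (x i)) ∧
  (∀ i, 0 ≤ lam i) ∧
  ∃ s : Fin m → Fin n → ℝ,
    (∀ i j, s i j ∈ Set.Icc (0 : ℝ) 1) ∧
    (∀ i j, 0 < (inner ℝ (w j) (x i) : ℝ) + b j → s i j = 1) ∧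
    (∀ i j, (inner ℝ (w j) (x i) : ℝ) + b j < 0 → s i j = 0) ∧
    (∀ j, w j = vsign n j • ∑ i, (lam i * y i * s i j) • x i) ∧
    (∀ j, b j = vsign n j * ∑ i, lam i * y i * s i j) ∧
    (∀ i, lam i * (y i * netF w b (x i) - 1) = 0)

open Finset RealInnerProductSpace

section NearlyOrthonormal

variable {E ι : Type*} [NormedAddCommGroup E] [InnerProductSpace ℝ E] {x : ι → E} {ε : ℝ}

lemma abs_inner_sub_ite_le [DecidableEq ι] (hx : ∀ i, ‖x i‖ = 1)
    (horth : ∀ i j, i ≠ j → |⟪x i, x j⟫| ≤ ε) (hε : 0 ≤ ε) (k i : ι) :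
    |⟪x k, x i⟫ - if k = i then 1 else 0| ≤ ε := by
  by_cases h : k = i
  · subst h
    simp [hx, hε]
  · simpa [h] using horth k i h

variable [Fintype ι]

lemma abs_inner_sum_smul_sub_le (hx : ∀ i, ‖x i‖ = 1)
    (horth : ∀ i j, i ≠ j → |⟪x i, x j⟫| ≤ ε) (hε : 0 ≤ ε) (a : ι → ℝ) (i : ι) :
    |⟪∑ k, a k • x k, x i⟫ - a i| ≤ ε * ∑ k, |a k| := by
  classical
  have h : ⟪∑ k, a k • x k, x i⟫ - a i = ∑ k, a k * (⟪x k, x i⟫ - if k = i then 1 else 0) := by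
    simp [sum_inner, real_inner_smul_left, mul_sub, sum_sub_distrib]
  rw [h, mul_sum]
  refine (abs_sum_le_sum_abs _ _).trans (sum_le_sum fun k _ => ?_)
  rw [abs_mul, mul_comm ε]
  exact mul_le_mul_of_nonneg_left (abs_inner_sub_ite_le hx horth hε k i) (abs_nonneg _)

lemma sum_sq_sub_mul_sq_le_norm_sq (hx : ∀ i, ‖x i‖ = 1)
    (horth : ∀ i j, i ≠ j → |⟪x i, x j⟫| ≤ ε) (hε : 0 ≤ ε) (a : ι → ℝ) :
    ∑ k, a k ^ 2 - ε * (∑ k, |a k|) ^ 2 ≤ ‖∑ k, a k • x k‖ ^ 2 := by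
  have hnorm : ‖∑ k, a k • x k‖ ^ 2 = ∑ i, a i * ⟪∑ k, a k • x k, x i⟫ := by
    rw [← real_inner_self_eq_norm_sq, inner_sum]
    simp [real_inner_smul_right]
  have hterm : ∀ i, a i ^ 2 - a i * ⟪∑ k, a k • x k, x i⟫ ≤ |a i| * (ε * ∑ k, |a k|) := by
    intro i
    calc a i ^ 2 - a i * ⟪∑ k, a k • x k, x i⟫
        = -(a i * (⟪∑ k, a k • x k, x i⟫ - a i)) := by ring
      _ ≤ |a i * (⟪∑ k, a k • x k, x i⟫ - a i)| := neg_le_abs _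
      _ ≤ |a i| * (ε * ∑ k, |a k|) := by
        rw [abs_mul]
        exact mul_le_mul_of_nonneg_left (abs_inner_sum_smul_sub_le hx horth hε a i) (abs_nonneg _)
  have := sum_le_sum fun i (_ : i ∈ univ) => hterm i
  rw [sum_sub_distrib, ← sum_mul] at this
  rw [hnorm]
  linarith

end NearlyOrthonormal

lemma sum_nonneg_of_neg_le {ι : Type*} [Fintype ι] (q : ι → ℝ) {η : ℝ} (hη : 0 ≤ η)
    (hq : ∀ k, q k < 0 → -q k ≤ η) (h : 2 * Fintype.card ι * η ≤ ∑ k, |q k|) :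
    0 ≤ ∑ k, q k := by
  have hk : ∀ k, |q k| - q k ≤ 2 * η := fun k => by
    rcases lt_or_ge (q k) 0 with hk | hk
    · rw [abs_of_neg hk]
      linarith [hq k hk]
    · rw [abs_of_nonneg hk]
      linarith
  have := sum_le_sum fun k (_ : k ∈ univ) => hk k
  rw [sum_sub_distrib, sum_const, card_univ, nsmul_eq_mul] at this
  linarith

lemma abs_mul_mul_le {l t u : ℝ} (hl : 0 ≤ l) (ht : |t| = 1) (hu : u ∈ Set.Icc (0 : ℝ) 1) :
    |l * t * u| ≤ l := by
  rw [abs_mul, abs_mul, ht, abs_of_nonneg hl, abs_of_nonneg hu.1, mul_one]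
  exact mul_le_of_le_one_right hl hu.2

lemma sqrt_two_mul_div_mul_mul_le {L D M N : ℝ} (hD : 0 ≤ D) (hM : 1 ≤ M) (hN : 0 ≤ N)
    (h : 32 * M ^ 4 * N ^ 2 * L ≤ D) : Real.sqrt (2 * L / D) * M * N ≤ 1 / 4 := by
  rcases le_or_gt (2 * L / D) 0 with hq | hq
  · simp [Real.sqrt_eq_zero'.mpr hq]
  have hD : 0 < D := hD.lt_of_ne fun h0 => by simp [← h0] at hq
  have hL : 0 < L := by nlinarith [div_mul_cancel₀ (2 * L) hD.ne']
  rw [← pow_le_pow_iff_left₀ (by positivity) (by norm_num) two_ne_zero, mul_pow, mul_pow,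
    Real.sq_sqrt hq.le, div_mul_eq_mul_div, div_mul_eq_mul_div, div_le_iff₀ hD]
  nlinarith [pow_le_pow_right₀ hM (by norm_num : 2 ≤ 4), mul_nonneg hL.le (sq_nonneg N)]

lemma relu_eq_mul_of_activation {z s : ℝ} (h1 : 0 < z → s = 1) (h0 : z < 0 → s = 0) :
    relu z = s * z := by
  rcases lt_trichotomy z 0 with hz | rfl | hz
  · simp [relu, h0 hz, hz.le]
  · simp [relu]
  · simp [relu, h1 hz, hz.le]

lemma mul_relu_add_le {v b t : ℝ} (hv : v = 1 ∨ v = -1) (hb : 0 ≤ b) :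
    v * relu (t + b) ≤ v * b + |t| := by
  rcases hv with rfl | rfl
  · simpa [relu] using ⟨by linarith [le_abs_self t], by linarith [abs_nonneg t]⟩
  · simp only [relu, neg_mul, one_mul]
    linarith [le_max_left (t + b) 0, neg_abs_le t]

lemma vsign_eq_one_or_neg_one (n : ℕ) (j : Fin n) : vsign n j = 1 ∨ vsign n j = -1 := by
  unfold vsign
  split_ifs <;> simp

lemma abs_vsign (n : ℕ) (j : Fin n) : |vsign n j| = 1 := by
  rcases vsign_eq_one_or_neg_one n j with h | h <;> simp [h]

lemma sum_vsign_mul (n : ℕ) (f : Fin n → ℝ) :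
    ∑ j, vsign n j * f j = (∑ j ∈ univ.filter (fun j : Fin n => (j : ℕ) < n / 2), f j) -
      ∑ j ∈ univ.filter (fun j : Fin n => n / 2 ≤ (j : ℕ)), f j := by
  simp [vsign, ite_mul, sum_ite, sub_eq_add_neg]

section Network

variable {d m n : ℕ} {x : Fin m → EuclideanSpace ℝ (Fin d)}
  {w : Fin n → EuclideanSpace ℝ (Fin d)} {b : Fin n → ℝ} {ε : ℝ}

lemma netF_eq_sum_activation {z : EuclideanSpace ℝ (Fin d)} {s : Fin n → ℝ}
    (hs1 : ∀ j, 0 < ⟪w j, z⟫ + b j → s j = 1) (hs0 : ∀ j, ⟪w j, z⟫ + b j < 0 → s j = 0) :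
    netF w b z = ∑ j, vsign n j * (s j * (⟪w j, z⟫ + b j)) := by
  unfold netF
  simp_rw [relu_eq_mul_of_activation (hs1 _) (hs0 _)]

lemma exists_eq_one_of_netF_ne_zero {z : EuclideanSpace ℝ (Fin d)} {s : Fin n → ℝ}
    (hs1 : ∀ j, 0 < ⟪w j, z⟫ + b j → s j = 1) (h : netF w b z ≠ 0) : ∃ j, s j = 1 := by
  by_contra! hs
  refine h (sum_eq_zero fun j _ => ?_)
  have hz : ⟪w j, z⟫ + b j ≤ 0 := not_lt.mp fun hz => hs j (hs1 j hz)
  simp [relu, max_eq_right hz]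

lemma abs_inner_sub_vsign_mul_le (hx : ∀ i, ‖x i‖ = 1)
    (horth : ∀ i j, i ≠ j → |⟪x i, x j⟫| ≤ ε) (hε : 0 ≤ ε) (a : Fin m → Fin n → ℝ)
    (hw : ∀ j, w j = vsign n j • ∑ k, a k j • x k) (j : Fin n) (i : Fin m) :
    |⟪w j, x i⟫ - vsign n j * a i j| ≤ ε * ∑ k, |a k j| := by
  rw [hw j, real_inner_smul_left, ← mul_sub, abs_mul, abs_vsign, one_mul]
  exact abs_inner_sum_smul_sub_le hx horth hε (a · j) i

/-- If `b j < 0`, every sample pushing the bias down keeps neuron `j` active, so it contributes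
at most `ε ∑ₖ |a k j|`; summing over the `m` samples contradicts `2 m ε ≤ 1`. -/
lemma bias_nonneg (hx : ∀ i, ‖x i‖ = 1) (horth : ∀ i j, i ≠ j → |⟪x i, x j⟫| ≤ ε)
    (hε : 0 ≤ ε) (hmε : 2 * m * ε ≤ 1) (a : Fin m → Fin n → ℝ)
    (hw : ∀ j, w j = vsign n j • ∑ k, a k j • x k) (hb : ∀ j, b j = vsign n j * ∑ k, a k j)
    (hact : ∀ k j, a k j ≠ 0 → 0 ≤ ⟪w j, x k⟫ + b j) (j : Fin n) : 0 ≤ b j := by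
  set ρ := ∑ k, |a k j|
  have hρ : 0 ≤ ρ := sum_nonneg fun k _ => abs_nonneg _
  by_contra! hneg
  have hsum : 0 ≤ ∑ k, vsign n j * a k j := by
    refine sum_nonneg_of_neg_le _ (mul_nonneg hε hρ) (fun k hk => ?_) ?_
    · have hz := hact k j fun h0 => by simp [h0] at hk
      linarith [(abs_le.mp (abs_inner_sub_vsign_mul_le hx horth hε a hw j k)).2]
    · simp only [abs_mul, abs_vsign, one_mul, Fintype.card_fin]
      nlinarith
  rw [← mul_sum, ← hb j] at hsum
  linarith

lemma netF_le_sum_vsign_mul_add (hx : ∀ i, ‖x i‖ = 1)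
    (horth : ∀ i j, i ≠ j → |⟪x i, x j⟫| ≤ ε) (hε : 0 ≤ ε) (a : Fin m → Fin n → ℝ)
    (hw : ∀ j, w j = vsign n j • ∑ k, a k j • x k) (hb : ∀ j, 0 ≤ b j) {c : Fin m → ℝ}
    (hac : ∀ k j, |a k j| ≤ c k) (i : Fin m) :
    netF w b (x i) ≤ ∑ j, vsign n j * b j + n * (c i + ε * ∑ k, c k) := by
  have hterm : ∀ j,
      vsign n j * relu (⟪w j, x i⟫ + b j) ≤ vsign n j * b j + (c i + ε * ∑ k, c k) := by
    intro j
    refine (mul_relu_add_le (vsign_eq_one_or_neg_one n j) (hb j)).trans (add_le_add le_rfl ?_)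
    have := abs_sub_abs_le_abs_sub ⟪w j, x i⟫ (vsign n j * a i j)
    rw [abs_mul, abs_vsign, one_mul] at this
    have hsum : ε * ∑ k, |a k j| ≤ ε * ∑ k, c k := by gcongr with k; exact hac k j
    linarith [abs_inner_sub_vsign_mul_le hx horth hε a hw j i, hac i j]
  calc netF w b (x i) ≤ ∑ j, (vsign n j * b j + (c i + ε * ∑ k, c k)) :=
        sum_le_sum fun j _ => hterm j
    _ = ∑ j, vsign n j * b j + n * (c i + ε * ∑ k, c k) := by
      rw [sum_add_distrib, sum_const, card_univ, Fintype.card_fin, nsmul_eq_mul]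

end Network

section KKT

variable {d m n : ℕ} {x : Fin m → EuclideanSpace ℝ (Fin d)} {y lam : Fin m → ℝ}
  {w : Fin n → EuclideanSpace ℝ (Fin d)} {b : Fin n → ℝ}

theorem sum_eq_sum_sq_of_isKKTFixWith (hkkt : IsKKTFixWith x y w b lam) :
    ∑ k, lam k = ∑ j, (‖w j‖ ^ 2 + b j ^ 2) := by
  obtain ⟨-, -, s, -, hs1, hs0, hw, hb, hcomp⟩ := hkkt
  calc ∑ k, lam k = ∑ k, lam k * y k * netF w b (x k) :=
        sum_congr rfl fun k _ => by linear_combination -(hcomp k)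
    _ = ∑ j, vsign n j * (⟪w j, ∑ k, (lam k * y k * s k j) • x k⟫ +
          b j * ∑ k, lam k * y k * s k j) := by
        simp_rw [netF_eq_sum_activation (hs1 _) (hs0 _), mul_sum, inner_sum,
          real_inner_smul_right, ← sum_add_distrib]
        rw [sum_comm]
        refine sum_congr rfl fun j _ => ?_
        rw [mul_sum]
        exact sum_congr rfl fun k _ => by ring
    _ = ∑ j, (‖w j‖ ^ 2 + b j ^ 2) := sum_congr rfl fun j _ => by
        rw [mul_add, ← real_inner_smul_right, ← hw j, real_inner_self_eq_norm_sq]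
        linear_combination -(b j) * hb j

lemma sq_le_sum_sq_of_isKKTFixWith {s : Fin m → Fin n → ℝ} (hy : ∀ k, |y k| = 1)
    (hs1 : ∀ k j, 0 < ⟪w j, x k⟫ + b j → s k j = 1)
    (hcomp : ∀ k, lam k * (y k * netF w b (x k) - 1) = 0) (k : Fin m) :
    lam k ^ 2 ≤ ∑ j, (lam k * y k * s k j) ^ 2 := by
  rcases eq_or_ne (lam k) 0 with h | h
  · simp [h]
  have hnet : netF w b (x k) ≠ 0 := fun h0 => h (by simpa [h0] using hcomp k)
  obtain ⟨j, hj⟩ := exists_eq_one_of_netF_ne_zero (hs1 k) hnet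
  have hy2 : y k ^ 2 = 1 := by rw [← sq_abs, hy k, one_pow]
  calc lam k ^ 2 = (lam k * y k * s k j) ^ 2 := by rw [hj, mul_one, mul_pow, hy2, mul_one]
    _ ≤ ∑ j, (lam k * y k * s k j) ^ 2 :=
        single_le_sum (f := fun j => (lam k * y k * s k j) ^ 2) (fun _ _ => sq_nonneg _)
          (mem_univ j)

variable {ε : ℝ}

theorem sum_sq_sub_le_sum_of_isKKTFixWith (hx : ∀ i, ‖x i‖ = 1)
    (horth : ∀ i j, i ≠ j → |⟪x i, x j⟫| ≤ ε) (hε : 0 ≤ ε) (hy : ∀ k, |y k| = 1)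
    (hkkt : IsKKTFixWith x y w b lam) :
    ∑ k, lam k ^ 2 - ε * n * (∑ k, lam k) ^ 2 ≤ ∑ k, lam k := by
  obtain ⟨-, hlam, s, hs, hs1, -, hw, -, hcomp⟩ := id hkkt
  have hsq : ∑ k, lam k ^ 2 ≤ ∑ j, ∑ k, (lam k * y k * s k j) ^ 2 := by
    rw [sum_comm]
    exact sum_le_sum fun k _ => sq_le_sum_sq_of_isKKTFixWith hy hs1 hcomp k
  have habs : ∑ j, ε * (∑ k, |lam k * y k * s k j|) ^ 2 ≤ ε * n * (∑ k, lam k) ^ 2 := by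
    calc ∑ j, ε * (∑ k, |lam k * y k * s k j|) ^ 2 ≤ ∑ _j : Fin n, ε * (∑ k, lam k) ^ 2 := by
          gcongr with j _ k _
          exact abs_mul_mul_le (hlam k) (hy k) (hs k j)
      _ = ε * n * (∑ k, lam k) ^ 2 := by
          rw [sum_const, card_univ, Fintype.card_fin, nsmul_eq_mul]
          ring
  calc ∑ k, lam k ^ 2 - ε * n * (∑ k, lam k) ^ 2
      ≤ ∑ j, (∑ k, (lam k * y k * s k j) ^ 2 - ε * (∑ k, |lam k * y k * s k j|) ^ 2) := by
        rw [sum_sub_distrib]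
        linarith
    _ ≤ ∑ j, ‖w j‖ ^ 2 := sum_le_sum fun j _ => by
        rw [hw j, norm_smul, mul_pow, Real.norm_eq_abs, abs_vsign, one_pow, one_mul]
        exact sum_sq_sub_mul_sq_le_norm_sq hx horth hε _
    _ ≤ ∑ j, (‖w j‖ ^ 2 + b j ^ 2) := sum_le_sum fun j _ => le_add_of_nonneg_right (sq_nonneg _)
    _ = ∑ k, lam k := (sum_eq_sum_sq_of_isKKTFixWith hkkt).symm

theorem mul_sum_le_of_isKKTFixWith (hx : ∀ i, ‖x i‖ = 1)
    (horth : ∀ i j, i ≠ j → |⟪x i, x j⟫| ≤ ε) (hε : 0 ≤ ε) (hεmn : ε * m * n ≤ 1 / 4)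
    (hy : ∀ k, |y k| = 1) (hkkt : IsKKTFixWith x y w b lam) :
    ε * n * ∑ k, lam k ≤ 1 / 3 := by
  obtain ⟨-, hlam, -⟩ := id hkkt
  set L := ∑ k, lam k
  set t := ε * m * n
  have hεn : 0 ≤ ε * n := by positivity
  have hcs : L ^ 2 ≤ m * ∑ k, lam k ^ 2 := by
    simpa using sq_sum_le_card_mul_sum_sq (s := univ) (f := lam)
  have hquad : L ^ 2 * (1 - t) ≤ m * L := by
    nlinarith [sum_sq_sub_le_sum_of_isKKTFixWith hx horth hε hy hkkt]
  have hL0 : 0 ≤ L := sum_nonneg fun k _ => hlam k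
  rcases hL0.eq_or_lt with hL | hL
  · rw [← hL]
    norm_num
  have hlin : ε * n * L * (1 - t) ≤ t := by
    have h1 : L * (1 - t) ≤ m :=
      le_of_mul_le_mul_left (by linarith : L * (L * (1 - t)) ≤ L * m) hL
    have := mul_le_mul_of_nonneg_left h1 hεn
    linarith
  nlinarith [mul_le_mul_of_nonneg_left (by linarith : (3 : ℝ) / 4 ≤ 1 - t)
    (mul_nonneg hεn hL.le)]

end KKT

theorem stmt16_general {d m n : ℕ} (δ : ℝ)
    (x : Fin m → EuclideanSpace ℝ (Fin d)) (y : Fin m → ℝ)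
    (hx : ∀ i, ‖x i‖ = 1)
    (hy : ∀ i, y i = 1 ∨ y i = -1)
    (horth : ∀ i j, i ≠ j →
      |(inner ℝ (x i) (x j) : ℝ)| ≤ Real.sqrt (2 * Real.log (2 * (m : ℝ) ^ 2 / δ) / d))
    (hd : 32 * (m : ℝ) ^ 4 * (n : ℝ) ^ 2 * Real.log (2 * (m : ℝ) ^ 2 / δ) ≤ (d : ℝ))
    (w : Fin n → EuclideanSpace ℝ (Fin d)) (b : Fin n → ℝ) (lam : Fin m → ℝ)
    (hkkt : IsKKTFixWith x y w b lam)
    (hbias : (∑ j ∈ Finset.univ.filter (fun j : Fin n => (j : ℕ) < n / 2), b j) -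
        (∑ j ∈ Finset.univ.filter (fun j : Fin n => n / 2 ≤ (j : ℕ)), b j) ≤ 1 / 4) :
    ∀ i, y i = 1 → 1 / (4 * (n : ℝ)) ≤ lam i := by
  intro i hyi
  obtain ⟨hfeas, hlam, s, hs, -, hs0, hw, hb, -⟩ := id hkkt
  set ε := Real.sqrt (2 * Real.log (2 * (m : ℝ) ^ 2 / δ) / d)
  have hε : 0 ≤ ε := Real.sqrt_nonneg _
  have hn : (1 : ℝ) ≤ n := Nat.one_le_cast.mpr <| Nat.pos_of_ne_zero fun h0 => by
    subst h0
    have h := hfeas i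
    norm_num [netF] at h
  have hεmn : ε * m * n ≤ 1 / 4 := sqrt_two_mul_div_mul_mul_le (Nat.cast_nonneg d)
    (Nat.one_le_cast.mpr i.pos) (Nat.cast_nonneg n) hd
  have hy' : ∀ k, |y k| = 1 := fun k => by rcases hy k with h | h <;> simp [h]
  have hb0 : ∀ j, 0 ≤ b j := bias_nonneg hx horth hε (by nlinarith) _ hw hb
    fun k j hk => not_lt.mp fun hz => hk (by simp [hs0 k j hz])
  have hnet := netF_le_sum_vsign_mul_add hx horth hε _ hw hb0
    (fun k j => abs_mul_mul_le (hlam k) (hy' k) (hs k j)) i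
  have hmargin := hfeas i
  rw [sum_vsign_mul] at hnet
  rw [hyi, one_mul] at hmargin
  rw [div_le_iff₀ (by positivity)]
  linarith [mul_sum_le_of_isKKTFixWith hx horth hε hεmn hy' hkkt]

/-- Lemma B.7: if the bias contribution is small then the multipliers of positive
samples are bounded below by 1/(4n). -/
theorem stmt16 {d m n : ℕ} (δ : ℝ) (hδ0 : 0 < δ) (hδ1 : δ < 1)
    (hn : Even n)
    (x : Fin m → EuclideanSpace ℝ (Fin d)) (y : Fin m → ℝ)
    (hx : ∀ i, ‖x i‖ = 1)
    (hy : ∀ i, y i = 1 ∨ y i = -1)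
    (horth : ∀ i j, i ≠ j →
      |(inner ℝ (x i) (x j) : ℝ)| ≤ Real.sqrt (2 * Real.log (2 * (m : ℝ) ^ 2 / δ) / d))
    (hd : 32 * (m : ℝ) ^ 4 * (n : ℝ) ^ 2 * Real.log (2 * (m : ℝ) ^ 2 / δ) ≤ (d : ℝ))
    (w : Fin n → EuclideanSpace ℝ (Fin d)) (b : Fin n → ℝ) (lam : Fin m → ℝ)
    (hkkt : IsKKTFixWith x y w b lam)
    (hbias : (∑ j ∈ Finset.univ.filter (fun j : Fin n => (j : ℕ) < n / 2), b j) -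
        (∑ j ∈ Finset.univ.filter (fun j : Fin n => n / 2 ≤ (j : ℕ)), b j) ≤ 1 / 4) :
    ∀ i, y i = 1 → 1 / (4 * (n : ℝ)) ≤ lam i :=
  stmt16_general δ x y hx hy horth hd w b lam hkkt hbias
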